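/- arXiv:2203.05092 — 3 statements merged into one kernel-verified Lean document; each statement's English description precedes it below -/
import Mathlib

section
/- Every tree-structured layout L over the task set 𝒯 with B branching points is reachable from the initial layout L₀ by a finite sequence of layout cuts; that is, the cut-based enumeration algorithm, which recursively applies layout cuts starting from L₀, explores the design space of tree-structured layouts completely. -/
/-- `P` is a partition of the finite task set `S` into nonempty pairwise-disjoint task sets. -/
def IsPartition {α : Type*} [DecidableEq α] (S : Finset α) (P : Finset (Finset α)) : Prop :=
  (∀ p ∈ P, p.Nonempty) ∧ (∀ p ∈ P, ∀ q ∈ P, p ≠ q → Disjoint p q) ∧ P.sup id = S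

/-- The partition `Q` refines the partition `P`: every part of `Q` is contained in some
part of `P`. -/
def Refines {α : Type*} (Q P : Finset (Finset α)) : Prop :=
  ∀ q ∈ Q, ∃ p ∈ P, q ⊆ p

/-- A tree-structured layout over the task set `S` with `B` branching points: a sequence of
partitions of `S` such that later partitions refine earlier ones. -/
def IsLayout {α : Type*} [DecidableEq α] (S : Finset α) {B : ℕ}
    (L : Fin B → Finset (Finset α)) : Prop :=
  (∀ i, IsPartition S (L i)) ∧ ∀ i j : Fin B, i ≤ j → Refines (L j) (L i)

/-- `L'` is obtained from the layout `L` by a layout cut: choose an index `i` and a task set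
`P` that is a part of `L j` for every `j ≥ i`, divide `P` into two nonempty disjoint sets
`A`, `B'` with `A ∪ B' = P`; keep `L' j = L j` for `j < i` and for `j ≥ i` replace the part
`P` by the two parts `A` and `B'`. -/
def IsCut {α : Type*} [DecidableEq α] {B : ℕ}
    (L L' : Fin B → Finset (Finset α)) : Prop :=
  ∃ (i : Fin B) (P A B' : Finset α),
    (∀ j, i ≤ j → P ∈ L j) ∧ A.Nonempty ∧ B'.Nonempty ∧ Disjoint A B' ∧ A ∪ B' = P ∧
    (∀ j, j < i → L' j = L j) ∧
    (∀ j, i ≤ j → L' j = insert A (insert B' ((L j).erase P)))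

section Helpers

variable {α : Type*} [DecidableEq α]

lemma LP.part_subset {S : Finset α} {P : Finset (Finset α)} (hP : IsPartition S P)
    {p : Finset α} (hp : p ∈ P) : p ⊆ S := by
  have := Finset.le_sup (f := id) hp
  rw [hP.2.2] at this; exact this

lemma LP.part_eq {S : Finset α} {P : Finset (Finset α)} (hP : IsPartition S P)
    {p q : Finset α} (hp : p ∈ P) (hq : q ∈ P) (hnd : ¬ Disjoint p q) : p = q := by
  by_contra h; exact hnd (hP.2.1 p hp q hq h)

lemma LP.exists_part {S : Finset α} {P : Finset (Finset α)} (hP : IsPartition S P)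
    {x : α} (hx : x ∈ S) : ∃ p ∈ P, x ∈ p := by
  rw [← hP.2.2] at hx
  simpa using Finset.mem_sup.mp hx

lemma LP.refines_antisymm {S : Finset α} {P Q : Finset (Finset α)}
    (hP : IsPartition S P) (hQ : IsPartition S Q)
    (hQP : Refines Q P) (hPQ : Refines P Q) : P = Q := by
  have key : ∀ (R R' : Finset (Finset α)), IsPartition S R → IsPartition S R' →
      Refines R' R → Refines R R' → R ⊆ R' := by
    intro R R' hR hR' hR'R hRR' p hp
    obtain ⟨q, hq, hpq⟩ := hRR' p hp
    obtain ⟨p', hp', hqp'⟩ := hR'R q hq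
    obtain ⟨x, hx⟩ := hR.1 p hp
    have hpp : p = p' := LP.part_eq hR hp hp'
      (Finset.not_disjoint_iff.mpr ⟨x, hx, hqp' (hpq hx)⟩)
    have : q = p := Finset.Subset.antisymm (hpp ▸ hqp') hpq
    exact this ▸ hq
  exact Finset.Subset.antisymm (key P Q hP hQ hQP hPQ) (key Q P hQ hP hPQ hQP)

lemma LP.refines_eq {S : Finset α} {P Q : Finset (Finset α)}
    (hP : IsPartition S P) (hQ : IsPartition S Q) (hQP : Refines Q P)
    (h : ∀ p ∈ P, ∀ a ∈ Q, a ⊆ p → ∀ b ∈ Q, b ⊆ p → a = b) : P = Q := by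
  have key : ∀ q ∈ Q, ∀ p ∈ P, q ⊆ p → p ⊆ q := by
    intro q hq p hp hqp x hx
    obtain ⟨q', hq', hxq'⟩ := LP.exists_part hQ (LP.part_subset hP hp hx)
    obtain ⟨p', hp', hq'p'⟩ := hQP q' hq'
    have hpp : p' = p := LP.part_eq hP hp' hp
      (Finset.not_disjoint_iff.mpr ⟨x, hq'p' hxq', hx⟩)
    have : q' = q := h p hp q' hq' (hpp ▸ hq'p') q hq hqp
    exact this ▸ hxq'
  apply Finset.Subset.antisymm
  · intro p hp
    obtain ⟨x, hx⟩ := hP.1 p hp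
    obtain ⟨q, hq, hxq⟩ := LP.exists_part hQ (LP.part_subset hP hp hx)
    obtain ⟨p', hp', hqp'⟩ := hQP q hq
    have hpp : p' = p := LP.part_eq hP hp' hp
      (Finset.not_disjoint_iff.mpr ⟨x, hqp' hxq, hx⟩)
    have : q = p := Finset.Subset.antisymm (hpp ▸ hqp') (key q hq p hp (hpp ▸ hqp'))
    rw [← this]; exact hq
  · intro q hq
    obtain ⟨p, hp, hqp⟩ := hQP q hq
    have : q = p := Finset.Subset.antisymm hqp (key q hq p hp hqp)
    rw [this]; exact hp

lemma LP.partition_singleton {S : Finset α} {P : Finset (Finset α)}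
    (hP : IsPartition S P) (h : S ∈ P) : P = {S} := by
  apply Finset.Subset.antisymm
  · intro q hq
    obtain ⟨x, hx⟩ := hP.1 q hq
    have : q = S := LP.part_eq hP hq h
      (Finset.not_disjoint_iff.mpr ⟨x, hx, LP.part_subset hP hq hx⟩)
    simp [this]
  · simpa using h

lemma LP.exists_two_parts {S : Finset α} (hS : S.Nonempty) {P : Finset (Finset α)}
    (hP : IsPartition S P) (h : P ≠ {S}) : ∃ A ∈ P, ∃ B' ∈ P, A ≠ B' := by
  obtain ⟨x, hx⟩ := hS
  obtain ⟨A, hA, hxA⟩ := LP.exists_part hP hx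
  by_cases hAS : A = S
  · exact absurd (LP.partition_singleton hP (hAS ▸ hA)) h
  · have hns : ¬ S ⊆ A := fun hsub => hAS (Finset.Subset.antisymm (LP.part_subset hP hA) hsub)
    obtain ⟨y, hyS, hyA⟩ := Finset.not_subset.mp hns
    obtain ⟨B', hB', hyB⟩ := LP.exists_part hP hyS
    exact ⟨A, hA, B', hB', fun e => hyA (e ▸ hyB)⟩

lemma LP.merge_partition {S : Finset α} {P : Finset (Finset α)} (hP : IsPartition S P)
    {A B' : Finset α} (hA : A ∈ P) (hB : B' ∈ P) (hne : A ≠ B') :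
    IsPartition S (insert (A ∪ B') ((P.erase A).erase B')) := by
  have hXP : ((P.erase A).erase B') ⊆ P :=
    (Finset.erase_subset _ _).trans (Finset.erase_subset _ _)
  have hmemX : ∀ q ∈ (P.erase A).erase B', q ≠ A ∧ q ≠ B' ∧ q ∈ P := by
    intro q hq
    simp only [Finset.mem_erase] at hq
    exact ⟨hq.2.1, hq.1, hq.2.2⟩
  refine ⟨?_, ?_, ?_⟩
  · intro p hp
    rcases Finset.mem_insert.mp hp with h | h
    · subst h; exact (hP.1 A hA).mono Finset.subset_union_left
    · exact hP.1 p (hXP h)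
  · intro p hp q hq hpq
    rcases Finset.mem_insert.mp hp with h | h <;> rcases Finset.mem_insert.mp hq with h' | h'
    · exact absurd (h.trans h'.symm) hpq
    · subst h
      obtain ⟨hqA, hqB, hqP⟩ := hmemX q h'
      rw [Finset.disjoint_union_left]
      exact ⟨hP.2.1 A hA q hqP (fun e => hqA e.symm),
             hP.2.1 B' hB q hqP (fun e => hqB e.symm)⟩
    · subst h'
      obtain ⟨hpA, hpB, hpP⟩ := hmemX p h
      rw [Finset.disjoint_union_right]
      exact ⟨hP.2.1 p hpP A hA hpA, hP.2.1 p hpP B' hB hpB⟩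
    · exact hP.2.1 p (hXP h) q (hXP h') hpq
  · have hBA : B' ∈ P.erase A := Finset.mem_erase.mpr ⟨fun e => hne e.symm, hB⟩
    have hP' : P = insert A (insert B' ((P.erase A).erase B')) := by
      rw [Finset.insert_erase hBA, Finset.insert_erase hA]
    rw [← hP.2.2]
    conv_rhs => rw [hP']
    simp only [Finset.sup_insert, id]
    rw [← sup_assoc]
    rfl

lemma LP.merge_card {P : Finset (Finset α)} {A B' : Finset α}
    (hA : A ∈ P) (hB : B' ∈ P) (hne : A ≠ B') :
    (insert (A ∪ B') ((P.erase A).erase B')).card < P.card := by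
  have hBA : B' ∈ P.erase A := Finset.mem_erase.mpr ⟨fun e => hne e.symm, hB⟩
  have h2 : 1 < P.card := Finset.one_lt_card.mpr ⟨A, hA, B', hB, hne⟩
  have hle := Finset.card_insert_le (A ∪ B') ((P.erase A).erase B')
  rw [Finset.card_erase_of_mem hBA, Finset.card_erase_of_mem hA] at hle
  omega

lemma LP.aux {S : Finset α} (hS : S.Nonempty) {B : ℕ} (hB : 1 ≤ B) :
    ∀ n (L : Fin B → Finset (Finset α)), (∑ j, (L j).card) ≤ n → IsLayout S L →
    Relation.ReflTransGen IsCut (fun _ : Fin B => ({S} : Finset (Finset α))) L := by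
  intro n
  induction n with
  | zero =>
    intro L hn hL
    exfalso
    have k : Fin B := ⟨B - 1, by omega⟩
    obtain ⟨x, hx⟩ := hS
    obtain ⟨p, hp, _⟩ := LP.exists_part (hL.1 k) hx
    have h1 : 1 ≤ (L k).card := Finset.card_pos.mpr ⟨p, hp⟩
    have h2 : (L k).card ≤ ∑ j, (L j).card :=
      Finset.single_le_sum (f := fun j => (L j).card) (fun j _ => Nat.zero_le _) (Finset.mem_univ k)
    omega
  | succ n ih =>
    intro L hn hL
    set k : Fin B := ⟨B - 1, by omega⟩ with hk
    have hk_top : ∀ j : Fin B, j ≤ k := by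
      intro j
      have := j.isLt
      simp only [Fin.le_def, hk]
      omega
    by_cases hLk : L k = {S}
    · have hL0 : L = fun _ => ({S} : Finset (Finset α)) := by
        funext j
        have href : Refines (L k) (L j) := hL.2 j k (hk_top j)
        have hSk : S ∈ L k := by rw [hLk]; exact Finset.mem_singleton_self S
        obtain ⟨p, hp, hSp⟩ := href S hSk
        have : p = S := Finset.Subset.antisymm (LP.part_subset (hL.1 j) hp) hSp
        exact LP.partition_singleton (hL.1 j) (this ▸ hp)
      rw [hL0]
    · classical
      set T : Finset (Fin B) := Finset.univ.filter (fun j => L j = L k) with hT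
      have hkT : k ∈ T := by simp [hT]
      have hTne : T.Nonempty := ⟨k, hkT⟩
      set i : Fin B := T.min' hTne with hi
      have hiT : i ∈ T := T.min'_mem hTne
      have hiLk : L i = L k := by simpa [hT] using hiT
      have hLeq : ∀ j, i ≤ j → L j = L k := by
        intro j hij
        exact LP.refines_antisymm (hL.1 j) (hL.1 k) (hL.2 j k (hk_top j))
          (hiLk ▸ hL.2 i j hij)
      obtain ⟨A, hAk, B', hBk, hne, hsub⟩ :
          ∃ A ∈ L k, ∃ B' ∈ L k, A ≠ B' ∧ ∀ j, j < i → ∃ p ∈ L j, A ∪ B' ⊆ p := by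
        rcases Nat.eq_zero_or_pos i.val with h0 | hpos
        · obtain ⟨A, hA, B', hB', hne⟩ := LP.exists_two_parts hS (hL.1 k) hLk
          refine ⟨A, hA, B', hB', hne, fun j hj => absurd hj ?_⟩
          simp only [not_lt, Fin.le_def, h0]
          omega
        · set i' : Fin B := ⟨i.val - 1, by omega⟩ with hi'
          have hi'i : i' < i := by
            simp only [Fin.lt_def, hi']
            omega
          have hi'ne : L i' ≠ L k := by
            intro h
            have : i ≤ i' := T.min'_le i' (by simp [hT, h])
            exact absurd hi'i (not_lt.mpr this)
          have hne' : L i' ≠ L i := fun h => hi'ne (h.trans hiLk)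
          have href : Refines (L i) (L i') := hL.2 i' i (le_of_lt hi'i)
          have hpair : ∃ p ∈ L i', ∃ a ∈ L i, a ⊆ p ∧ ∃ b ∈ L i, b ⊆ p ∧ a ≠ b := by
            by_contra hcon
            push_neg at hcon
            exact hne' (LP.refines_eq (hL.1 i') (hL.1 i) href
              (fun p hp a ha hap b hb hbp => hcon p hp a ha hap b hb hbp))
          obtain ⟨p, hp, A, hA, hAp, B', hB', hBp, hne⟩ := hpair
          refine ⟨A, hiLk ▸ hA, B', hiLk ▸ hB', hne, ?_⟩
          intro j hj
          have hji' : j ≤ i' := by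
            have := Fin.lt_def.mp hj
            simp only [Fin.le_def, hi']
            omega
          obtain ⟨p', hp', hpp'⟩ := hL.2 j i' hji' p hp
          exact ⟨p', hp', (Finset.union_subset hAp hBp).trans hpp'⟩
      have hAj : ∀ j, i ≤ j → A ∈ L j := fun j hij => (hLeq j hij).symm ▸ hAk
      have hBj : ∀ j, i ≤ j → B' ∈ L j := fun j hij => (hLeq j hij).symm ▸ hBk
      have hAne : A.Nonempty := (hL.1 k).1 A hAk
      have hBne : B'.Nonempty := (hL.1 k).1 B' hBk
      have hdisj : Disjoint A B' := (hL.1 k).2.1 A hAk B' hBk hne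
      set L'' : Fin B → Finset (Finset α) :=
        fun j => if i ≤ j then insert (A ∪ B') (((L j).erase A).erase B') else L j with hL''
      have hPnotin : ∀ j, i ≤ j → (A ∪ B') ∉ L j := by
        intro j hij hmem
        obtain ⟨x, hx⟩ := hAne
        have : A ∪ B' = A := LP.part_eq (hL.1 j) hmem (hAj j hij)
          (Finset.not_disjoint_iff.mpr ⟨x, Finset.mem_union_left _ hx, hx⟩)
        obtain ⟨y, hy⟩ := hBne
        have hyA : y ∈ A := this ▸ Finset.mem_union_right _ hy
        exact Finset.disjoint_left.mp hdisj hyA hy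
      have hL''layout : IsLayout S L'' := by
        constructor
        · intro j
          by_cases h : i ≤ j
          · simp only [hL'', if_pos h]
            exact LP.merge_partition (hL.1 j) (hAj j h) (hBj j h) hne
          · simp only [hL'', if_neg h]
            exact hL.1 j
        · intro j m hjm
          by_cases hj : i ≤ j
          · have hm : i ≤ m := le_trans hj hjm
            have : L'' m = L'' j := by
              simp only [hL'', if_pos hj, if_pos hm, hLeq j hj, hLeq m hm]
            rw [this]
            exact fun q hq => ⟨q, hq, subset_rfl⟩
          · by_cases hm : i ≤ m
            · intro q hq
              simp only [hL'', if_pos hm] at hq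
              rcases Finset.mem_insert.mp hq with h | h
              · obtain ⟨p, hp, hABp⟩ := hsub j (lt_of_not_ge hj)
                exact ⟨p, by simp only [hL'', if_neg hj]; exact hp, h ▸ hABp⟩
              · have hqm : q ∈ L m :=
                  ((Finset.erase_subset _ _).trans (Finset.erase_subset _ _)) h
                obtain ⟨p, hp, hqp⟩ := hL.2 j m hjm q hqm
                exact ⟨p, by simp only [hL'', if_neg hj]; exact hp, hqp⟩
            · intro q hq
              simp only [hL'', if_neg hj, if_neg hm] at hq ⊢
              exact hL.2 j m hjm q hq
      have hcut : IsCut L'' L := by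
        refine ⟨i, A ∪ B', A, B', ?_, hAne, hBne, hdisj, rfl, ?_, ?_⟩
        · intro j hij
          simp only [hL'', if_pos hij]
          exact Finset.mem_insert_self _ _
        · intro j hij
          simp only [hL'', if_neg (not_le.mpr hij)]
        · intro j hij
          simp only [hL'', if_pos hij]
          have hPX : (A ∪ B') ∉ ((L j).erase A).erase B' :=
            fun h => hPnotin j hij
              (((Finset.erase_subset _ _).trans (Finset.erase_subset _ _)) h)
          rw [Finset.erase_insert hPX]
          have hBA : B' ∈ (L j).erase A :=
            Finset.mem_erase.mpr ⟨fun e => hne e.symm, hBj j hij⟩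
          rw [Finset.insert_erase hBA, Finset.insert_erase (hAj j hij)]
      have hmeas : (∑ j, (L'' j).card) ≤ n := by
        have hlt : (∑ j, (L'' j).card) < ∑ j, (L j).card := by
          apply Finset.sum_lt_sum
          · intro j _
            by_cases h : i ≤ j
            · simp only [hL'', if_pos h]
              exact le_of_lt (LP.merge_card (hAj j h) (hBj j h) hne)
            · simp only [hL'', if_neg h]
              exact le_rfl
          · refine ⟨k, Finset.mem_univ k, ?_⟩
            have hik : i ≤ k := hk_top i
            simp only [hL'', if_pos hik]
            exact LP.merge_card (hAj k hik) (hBj k hik) hne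
        omega
      exact (ih L'' hmeas hL''layout).tail hcut

end Helpers

/-- Every tree-structured layout over the task set `S` is reachable from the initial layout
(in which every branching point carries the single-block partition `{S}`) by a finite
sequence of layout cuts: the cut-based enumeration explores the design space completely. -/
theorem layout_reachable_from_initial {α : Type*} [DecidableEq α]
    (S : Finset α) (hS : S.Nonempty) (B : ℕ) (hB : 1 ≤ B)
    (L : Fin B → Finset (Finset α)) (hL : IsLayout S L) :
    Relation.ReflTransGen IsCut (fun _ : Fin B => ({S} : Finset (Finset α))) L := by
  exact LP.aux hS hB _ L le_rfl hL
end

section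
/- Every tree-structured layout L is reachable from the initial layout L₀ by a sequence of layout cuts of length exactly k − 1, where k is the number of parts of the last partition L_B; in particular, every tree-structured layout is reachable from L₀ by at most T − 1 cuts. -/
/-! A partition `Q` refining `P` is reached from `P` by exactly `#Q - #P` splits of single parts:
while `Q ≠ P`, some part `q` of `Q` is not a part of `P`; splitting the part of `P` containing
`q` into `q` and the rest keeps `Q` a refinement and adds one part. A layout is then built level
by level. After level `t` is done, all levels `≥ t` equal `L t`, so refining `L t` into
`L (t + 1)` by cuts at index `t + 1` is legitimate: every part being split is a part of all
levels `≥ t + 1`. The counts add up to `(#L₀ - 1) + Σ (#L_{t+1} - #L_t) = #L_{B-1} - 1`. -/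

open Finset

def ReachIn {β : Type*} (r : β → β → Prop) (n : ℕ) (a b : β) : Prop :=
  ∃ f : ℕ → β, f 0 = a ∧ f n = b ∧ ∀ m < n, r (f m) (f (m + 1))

namespace ReachIn

variable {β γ : Type*} {r : β → β → Prop} {a b c : β} {m n : ℕ}

theorem refl (r : β → β → Prop) (a : β) : ReachIn r 0 a a :=
  ⟨fun _ => a, rfl, rfl, fun _ h => absurd h (Nat.not_lt_zero _)⟩

theorem single (h : r a b) : ReachIn r 1 a b :=
  ⟨fun k => if k = 0 then a else b, rfl, rfl,
    fun k hk => by simpa [Nat.lt_one_iff.mp hk] using h⟩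

theorem trans (hab : ReachIn r m a b) (hbc : ReachIn r n b c) : ReachIn r (m + n) a c := by
  obtain ⟨f, hf0, hfm, hf⟩ := hab
  obtain ⟨g, hg0, hgn, hg⟩ := hbc
  have hend : (if m + n ≤ m then f (m + n) else g (m + n - m)) = c := by
    split_ifs with h
    · obtain rfl : n = 0 := by omega
      rw [add_zero, hfm, ← hg0, hgn]
    · rw [Nat.add_sub_cancel_left, hgn]
  refine ⟨fun k => if k ≤ m then f k else g (k - m), by simp [hf0], hend, fun k hk => ?_⟩
  rcases lt_or_ge k m with hkm | hkm
  · simpa [hkm.le, Nat.succ_le_of_lt hkm] using hf k hkm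
  · have hstep := hg (k - m) (by omega)
    rcases hkm.eq_or_lt with rfl | hkm
    · simpa [hfm, hg0] using hstep
    · have hk : k + 1 - m = k - m + 1 := by omega
      simpa [hkm.not_ge, show ¬k + 1 ≤ m by omega, hk] using hstep

theorem map {s : γ → γ → Prop} (g : β → γ) (hg : ∀ x y, r x y → s (g x) (g y))
    (h : ReachIn r n a b) : ReachIn s n (g a) (g b) := by
  obtain ⟨f, hf0, hfn, hf⟩ := h
  exact ⟨g ∘ f, by simp [hf0], by simp [hfn], fun k hk => hg _ _ (hf k hk)⟩

end ReachIn

section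

variable {α : Type*} [DecidableEq α]

def IsSplit (P P' : Finset (Finset α)) : Prop :=
  ∃ X A B', X ∈ P ∧ A.Nonempty ∧ B'.Nonempty ∧ Disjoint A B' ∧ A ∪ B' = X ∧
    P' = insert A (insert B' (P.erase X))

namespace Finpartition

variable {s p q : Finset α}

def splitPart (P : Finpartition s) (hp : p ∈ P.parts) (hq : q.Nonempty) (hqp : q ⊂ p) :
    Finpartition s where
  parts := insert q (insert (p \ q) (P.parts.erase p))
  supIndep := by
    have hdisj : ∀ r ∈ P.parts.erase p, Disjoint p r := fun r hr =>
      P.disjoint hp (mem_of_mem_erase hr) (ne_of_mem_erase hr).symm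
    rw [supIndep_iff_pairwiseDisjoint, coe_insert, coe_insert]
    refine ((P.disjoint.subset (coe_subset.2 (erase_subset p _))).insert ?_).insert ?_
    · exact fun r hr _ => (hdisj r hr).mono_left sdiff_subset
    · simp only [Set.mem_insert_iff, mem_coe, forall_eq_or_imp, id]
      exact ⟨fun _ => disjoint_sdiff, fun r hr _ => (hdisj r hr).mono_left hqp.subset⟩
  sup_parts := by
    have h := P.sup_parts
    rw [← insert_erase hp, sup_insert] at h
    rwa [sup_insert, sup_insert, ← sup_assoc, id, id, sup_sdiff_cancel_right hqp.subset]
  bot_notMem := by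
    simp only [mem_insert, bot_eq_empty, mem_erase, not_or]
    exact ⟨hq.ne_empty.symm, (sdiff_nonempty.2 hqp.not_subset).ne_empty.symm,
      fun h => P.bot_notMem h.2⟩

section

variable {P Q : Finpartition s}

theorem isSplit_splitPart (hp : p ∈ P.parts) (hq : q.Nonempty) (hqp : q ⊂ p) :
    IsSplit P.parts (P.splitPart hp hq hqp).parts :=
  ⟨p, q, p \ q, hp, hq, sdiff_nonempty.2 hqp.not_subset, disjoint_sdiff,
    union_sdiff_of_subset hqp.subset, rfl⟩

theorem card_splitPart (hp : p ∈ P.parts) (hq : q.Nonempty) (hqp : q ⊂ p) :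
    #(P.splitPart hp hq hqp).parts = #P.parts + 1 := by
  have hpq : (p \ q).Nonempty := sdiff_nonempty.2 hqp.not_subset
  have not_mem_of_ssubset : ∀ r, r.Nonempty → r ⊂ p → r ∉ P.parts := fun r hr hrp hrP =>
    hrp.ne <| P.disjoint.elim hrP hp fun h =>
      hr.ne_empty (disjoint_self.1 (h.mono_right hrp.subset))
  have hq_ne : q ≠ p \ q := fun h => by
    have hd : Disjoint q (p \ q) := disjoint_sdiff
    rw [← h, disjoint_self] at hd
    exact hq.ne_empty hd
  rw [splitPart, card_insert_of_notMem, card_insert_of_notMem, card_erase_of_mem hp]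
  · have := card_pos.2 ⟨p, hp⟩
    omega
  · exact fun h => not_mem_of_ssubset _ hpq (sdiff_ssubset hqp.subset hq) (mem_of_mem_erase h)
  · simp only [mem_insert, mem_erase, not_or]
    exact ⟨hq_ne, fun h => not_mem_of_ssubset q hq hqp h.2⟩

theorem le_splitPart (hp : p ∈ P.parts) (hq : q.Nonempty) (hqp : q ⊂ p) (hQP : Q ≤ P)
    (hqQ : q ∈ Q.parts) : Q ≤ P.splitPart hp hq hqp := by
  intro r hr
  obtain ⟨p', hp', hrp'⟩ := hQP hr
  simp only [splitPart, mem_insert, mem_erase, exists_eq_or_imp]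
  by_cases hp'p : p' = p
  · subst hp'p
    by_cases hrq : r = q
    · exact Or.inl hrq.le
    · exact Or.inr (Or.inl (le_sdiff.2 ⟨hrp', Q.disjoint hr hqQ hrq⟩))
  · exact Or.inr (Or.inr ⟨p', ⟨hp'p, hp'⟩, hrp'⟩)

end

theorem reachIn_isSplit_of_le {P Q : Finpartition s} (h : Q ≤ P) :
    ReachIn IsSplit (#Q.parts - #P.parts) P.parts Q.parts := by
  by_cases hPQ : P ≤ Q
  · rw [le_antisymm hPQ h, Nat.sub_self]
    exact ReachIn.refl _ _
  obtain ⟨q, hqQ, hqP⟩ : ∃ q ∈ Q.parts, q ∉ P.parts := by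
    by_contra! hsub
    refine hPQ fun p hp => ?_
    obtain ⟨c, hc, hcp⟩ := exists_le_of_le h hp
    obtain rfl := P.disjoint.eq_of_le (hsub c hc) hp (Q.ne_bot hc) hcp
    exact ⟨c, hc, le_rfl⟩
  obtain ⟨p, hp, hqp⟩ := h hqQ
  have hqp : q ⊂ p := ssubset_of_subset_of_ne hqp fun hqp => hqP (hqp ▸ hp)
  have hq : q.Nonempty := nonempty_iff_ne_empty.2 (Q.ne_bot hqQ)
  have hQP' := le_splitPart hp hq hqp h hqQ
  have hcard := card_splitPart hp hq hqp
  have := card_mono hQP'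
  rw [show #Q.parts - #P.parts = 1 + (#Q.parts - #(P.splitPart hp hq hqp).parts) by omega]
  exact (ReachIn.single (isSplit_splitPart hp hq hqp)).trans (reachIn_isSplit_of_le hQP')
termination_by #Q.parts - #P.parts

end Finpartition

@[simps]
def IsPartition.toFinpartition {S : Finset α} {P : Finset (Finset α)} (h : IsPartition S P) :
    Finpartition S where
  parts := P
  supIndep := supIndep_iff_pairwiseDisjoint.2 fun p hp q hq hpq => h.2.1 p hp q hq hpq
  sup_parts := h.2.2
  bot_notMem hP := (h.1 ⊥ hP).ne_empty rfl

def fillFrom {β : Type*} {B : ℕ} (L : Fin B → β) (i : ℕ) (P : β) : Fin B → β :=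
  fun j => if (j : ℕ) < i then L j else P

section fillFrom

variable {β : Type*} {B : ℕ}

theorem fillFrom_zero (L : Fin B → β) (P : β) : fillFrom L 0 P = fun _ => P := by
  funext j
  simp [fillFrom]

theorem fillFrom_succ (L : Fin B → β) {t : ℕ} (ht : t < B) :
    fillFrom L (t + 1) (L ⟨t, ht⟩) = fillFrom L t (L ⟨t, ht⟩) := by
  funext j
  simp only [fillFrom]
  split_ifs with h₁ h₂ h₂
  · rfl
  · exact congrArg L (Fin.ext (show (j : ℕ) = t by omega))
  · exact absurd (h₂.trans t.lt_succ_self) h₁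
  · rfl

theorem fillFrom_sub_one (L : Fin B → β) (hB : B - 1 < B) :
    fillFrom L (B - 1) (L ⟨B - 1, hB⟩) = L := by
  funext j
  simp only [fillFrom]
  split_ifs with h
  · rfl
  · exact congrArg L (Fin.ext (show B - 1 = (j : ℕ) by omega))

theorem isCut_fillFrom (L : Fin B → Finset (Finset α)) {i : ℕ} (hi : i < B)
    {P P' : Finset (Finset α)} (h : IsSplit P P') :
    IsCut (fillFrom L i P) (fillFrom L i P') := by
  obtain ⟨X, A, B', hX, hA, hB', hAB, hunion, rfl⟩ := h
  refine ⟨⟨i, hi⟩, X, A, B', fun j hj => ?_, hA, hB', hAB, hunion, fun j hj => ?_,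
    fun j hj => ?_⟩
  · simp [fillFrom, not_lt.2 (Fin.le_def.1 hj), hX]
  · simp [fillFrom, Fin.lt_def.1 hj]
  · simp [fillFrom, not_lt.2 (Fin.le_def.1 hj)]

end fillFrom

theorem reachIn_fillFrom_of_le {B : ℕ} (L : Fin B → Finset (Finset α)) {i : ℕ} (hi : i < B)
    {S : Finset α} {P Q : Finpartition S} (h : Q ≤ P) :
    ReachIn IsCut (#Q.parts - #P.parts) (fillFrom L i P.parts) (fillFrom L i Q.parts) :=
  (Finpartition.reachIn_isSplit_of_le h).map _ fun _ _ => isCut_fillFrom L hi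

theorem IsLayout.reachIn_fillFrom {S : Finset α} (hS : S.Nonempty) {B : ℕ}
    {L : Fin B → Finset (Finset α)} (hL : IsLayout S L) (t : ℕ) (ht : t < B) :
    ReachIn IsCut (#(L ⟨t, ht⟩) - 1) (fun _ => {S}) (fillFrom L t (L ⟨t, ht⟩)) := by
  induction t with
  | zero =>
    have h := reachIn_fillFrom_of_le L ht (P := Finpartition.indiscrete hS.ne_empty)
      (Q := (hL.1 ⟨0, ht⟩).toFinpartition)
      fun _ hq => ⟨S, mem_singleton_self S, Finpartition.le _ hq⟩
    simpa [fillFrom_zero] using h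
  | succ t ih =>
    have hle : (hL.1 ⟨t + 1, ht⟩).toFinpartition ≤ (hL.1 ⟨t, by omega⟩).toFinpartition :=
      hL.2 _ _ (Fin.le_def.2 t.le_succ)
    have hpos :=
      card_pos.2 ((hL.1 ⟨t, by omega⟩).toFinpartition.parts_nonempty hS.ne_empty)
    have hcard := Finpartition.card_mono hle
    have hstep := reachIn_fillFrom_of_le L ht hle
    simp only [IsPartition.toFinpartition_parts, fillFrom_succ] at hcard hpos hstep
    have h := (ih (by omega)).trans hstep
    rwa [show #(L ⟨t, _⟩) - 1 + (#(L ⟨t + 1, ht⟩) - #(L ⟨t, _⟩)) = #(L ⟨t + 1, ht⟩) - 1 by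
      omega] at h

end

/-- Every tree-structured layout `L` is reachable from the initial layout by a sequence of
layout cuts of length exactly `k - 1`, where `k` is the number of parts of the last
partition of `L`; in particular, since `k ≤ |S| = T`, every layout is reachable from the
initial layout by at most `T - 1` cuts. -/
theorem layout_reachable_in_card_sub_one_cuts {α : Type*} [DecidableEq α]
    (S : Finset α) (hS : S.Nonempty) (B : ℕ) (hB : 1 ≤ B)
    (L : Fin B → Finset (Finset α)) (hL : IsLayout S L) :
    (∃ f : ℕ → (Fin B → Finset (Finset α)),
        f 0 = (fun _ : Fin B => ({S} : Finset (Finset α))) ∧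
        f ((L (⟨B - 1, by omega⟩ : Fin B)).card - 1) = L ∧
        ∀ m < (L (⟨B - 1, by omega⟩ : Fin B)).card - 1, IsCut (f m) (f (m + 1))) ∧
      (L (⟨B - 1, by omega⟩ : Fin B)).card - 1 ≤ S.card - 1 := by
  have hlast : B - 1 < B := by omega
  refine ⟨?_, Nat.sub_le_sub_right (hL.1 _).toFinpartition.card_parts_le_card 1⟩
  have h := hL.reachIn_fillFrom hS (B - 1) hlast
  rwa [fillFrom_sub_one] at h
end

section
/- The size of the design space of tree-structured multi-task architectures is at most ((2^{T−1} − 1) · B + 1)^{T−1}: for a task set 𝒯 with |𝒯| = T ≥ 1 and B ≥ 1 branching points, the number of tree-structured layouts is at most ((2^{T−1} − 1)·B + 1)^{T−1}. -/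
/-!
A layout whose last partition has `k + 2` parts is a layout cut of a layout whose last partition
has `k + 1` parts: let `i` be the first index from which the partitions are constant, and merge
two parts of the last partition that lie in a common part of `L (i - 1)` (any two parts if
`i = 0`). Fixing a task `m`, the cut is recovered from `i` and whichever of its two pieces avoids
`m`, a nonempty subset of `S \ {m}`. As the last partition has at most `T` parts, padding with
"no cut" letters decodes every layout from a word of length `T - 1` over an alphabet of
`(2 ^ (T - 1) - 1) * B + 1` letters.
-/

lemma Fin.exists_start_of_final_run {β : Type*} {n : ℕ} (f : Fin (n + 1) → β) :
    ∃ i, (∀ j, i ≤ j → f j = f (Fin.last n)) ∧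
      ∀ k : Fin n, i = k.succ → f k.castSucc ≠ f (Fin.last n) := by
  classical
  let final : Finset (Fin (n + 1)) := Finset.univ.filter fun i => ∀ j, i ≤ j → f j = f (last n)
  have hfinal : final.Nonempty :=
    ⟨last n, Finset.mem_filter.2 ⟨Finset.mem_univ _, fun j hj => by rw [last_le_iff.1 hj]⟩⟩
  have hi : ∀ j, final.min' hfinal ≤ j → f j = f (last n) :=
    (Finset.mem_filter.1 (final.min'_mem hfinal)).2
  refine ⟨_, hi, fun k hk heq => ?_⟩
  have hle : final.min' hfinal ≤ k.castSucc :=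
    final.min'_le _ (Finset.mem_filter.2 ⟨Finset.mem_univ _, fun j hj => by
      rcases hj.eq_or_lt with rfl | hlt
      · exact heq
      · exact hi j (hk ▸ castSucc_lt_iff_succ_le.1 hlt)⟩)
  rw [hk] at hle
  exact hle.not_gt castSucc_lt_succ

section

variable {α : Type*} [DecidableEq α]

def mergeParts (P : Finset (Finset α)) (A C : Finset α) : Finset (Finset α) :=
  insert (A ∪ C) ((P.erase A).erase C)

lemma refines_mergeParts {P Q : Finset (Finset α)} {A C : Finset α} (h : Refines Q P)
    (hAC : ∃ p ∈ P, A ∪ C ⊆ p) : Refines (mergeParts Q A C) P := by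
  simp only [Refines, mergeParts, Finset.forall_mem_insert]
  exact ⟨hAC, fun q hq => h q (Finset.mem_of_mem_erase (Finset.mem_of_mem_erase hq))⟩

namespace IsPartition

variable {S : Finset α} {P Q : Finset (Finset α)} {A C p q : Finset α} {x : α}

def toFinpartition_s10 (hP : IsPartition S P) : Finpartition S where
  parts := P
  supIndep := Finset.supIndep_iff_pairwiseDisjoint.2 fun p hp q hq hpq => hP.2.1 p hp q hq hpq
  sup_parts := hP.2.2
  bot_notMem h := Finset.not_nonempty_empty (hP.1 ∅ h)

lemma subset (hP : IsPartition S P) (hp : p ∈ P) : p ⊆ S :=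
  hP.toFinpartition_s10.subset hp

lemma exists_mem (hP : IsPartition S P) (hx : x ∈ S) : ∃ p ∈ P, x ∈ p :=
  hP.toFinpartition_s10.exists_mem hx

lemma eq_of_mem (hP : IsPartition S P) (hp : p ∈ P) (hq : q ∈ P) (hxp : x ∈ p) (hxq : x ∈ q) :
    p = q :=
  hP.toFinpartition_s10.eq_of_mem_parts hp hq hxp hxq

lemma card_le (hP : IsPartition S P) : P.card ≤ S.card :=
  hP.toFinpartition_s10.card_parts_le_card

lemma eq_singleton_of_mem (hP : IsPartition S P) (hS : S ∈ P) : P = {S} :=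
  Finset.eq_singleton_iff_unique_mem.2 ⟨hS, fun q hq =>
    let ⟨_, hx⟩ := hP.1 q hq
    hP.eq_of_mem hq hS hx (hP.subset hq hx)⟩

lemma eq_singleton_of_card_le_one (hP : IsPartition S P) (hS : S.Nonempty) (h : P.card ≤ 1) :
    P = {S} := by
  obtain ⟨x, hx⟩ := hS
  obtain ⟨p, hp, -⟩ := hP.exists_mem hx
  have hPp : P = {p} :=
    Finset.eq_singleton_iff_unique_mem.2 ⟨hp, fun q hq => Finset.card_le_one.1 h q hq p hp⟩
  have hpS : p = S := by simpa [hPp] using hP.2.2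
  rw [hPp, hpS]

lemma eq_of_subset (hP : IsPartition S P) (hQ : IsPartition S Q) (h : Q ⊆ P) : Q = P := by
  refine h.antisymm fun p hp => ?_
  obtain ⟨x, hx⟩ := hP.1 p hp
  obtain ⟨q, hq, hxq⟩ := hQ.exists_mem (hP.subset hp hx)
  rwa [← hP.eq_of_mem (h hq) hp hxq hx]

lemma exists_pair_subset_of_refines (hP : IsPartition S P) (hQ : IsPartition S Q)
    (h : Refines Q P) (hne : Q ≠ P) : ∃ A ∈ Q, ∃ C ∈ Q, A ≠ C ∧ ∃ p ∈ P, A ∪ C ⊆ p := by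
  obtain ⟨A, hA, hAP⟩ := Finset.not_subset.1 fun hsub => hne (hP.eq_of_subset hQ hsub)
  obtain ⟨p, hp, hAp⟩ := h A hA
  obtain ⟨x, hxp, hxA⟩ :=
    Finset.exists_of_ssubset (hAp.ssubset_of_ne fun hAp' => hAP (hAp' ▸ hp))
  obtain ⟨C, hC, hxC⟩ := hQ.exists_mem (hP.subset hp hxp)
  obtain ⟨p', hp', hCp'⟩ := h C hC
  obtain rfl : p' = p := hP.eq_of_mem hp' hp (hCp' hxC) hxp
  exact ⟨A, hA, C, hC, fun hAC => hxA (hAC ▸ hxC), p', hp', Finset.union_subset hAp hCp'⟩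

lemma union_notMem_erase_erase (hP : IsPartition S P) (hA : A ∈ P) :
    A ∪ C ∉ (P.erase A).erase C := by
  intro h
  obtain ⟨x, hx⟩ := hP.1 A hA
  have h' := Finset.mem_of_mem_erase h
  exact Finset.ne_of_mem_erase h'
    (hP.eq_of_mem (Finset.mem_of_mem_erase h') hA (Finset.mem_union_left C hx) hx)

lemma card_mergeParts (hP : IsPartition S P) (hA : A ∈ P) (hC : C ∈ P) (hAC : A ≠ C) :
    (mergeParts P A C).card + 1 = P.card := by
  rw [mergeParts, Finset.card_insert_of_notMem (hP.union_notMem_erase_erase hA),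
    Finset.card_erase_add_one (Finset.mem_erase.2 ⟨hAC.symm, hC⟩), Finset.card_erase_add_one hA]

lemma insert_insert_erase_mergeParts (hP : IsPartition S P) (hA : A ∈ P) (hC : C ∈ P)
    (hAC : A ≠ C) : insert A (insert C ((mergeParts P A C).erase (A ∪ C))) = P := by
  rw [mergeParts, Finset.erase_insert (hP.union_notMem_erase_erase hA),
    Finset.insert_erase (Finset.mem_erase.2 ⟨hAC.symm, hC⟩), Finset.insert_erase hA]

lemma mergeParts (hP : IsPartition S P) (hA : A ∈ P) (hC : C ∈ P) (hAC : A ≠ C) :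
    IsPartition S (mergeParts P A C) := by
  have hrest : ∀ q ∈ (P.erase A).erase C, q ∈ P ∧ Disjoint (A ∪ C) q := fun q hq => by
    obtain ⟨hqC, hqA, hq⟩ : q ≠ C ∧ q ≠ A ∧ q ∈ P := by simpa using hq
    exact ⟨hq, Finset.disjoint_union_left.2 ⟨hP.2.1 A hA q hq hqA.symm, hP.2.1 C hC q hq hqC.symm⟩⟩
  refine ⟨?_, ?_, ?_⟩
  · simp only [_root_.mergeParts, Finset.forall_mem_insert]
    exact ⟨(hP.1 A hA).mono Finset.subset_union_left, fun q hq => hP.1 q (hrest q hq).1⟩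
  · simp only [_root_.mergeParts, Finset.mem_insert]
    rintro p (rfl | hp) q (rfl | hq) hpq
    · exact absurd rfl hpq
    · exact (hrest q hq).2
    · exact (hrest p hp).2.symm
    · exact hP.2.1 p (hrest p hp).1 q (hrest q hq).1 hpq
  · calc (_root_.mergeParts P A C).sup id = (insert A (insert C ((P.erase A).erase C))).sup id := by
          simp [_root_.mergeParts, Finset.union_assoc]
      _ = S := by rw [Finset.insert_erase (Finset.mem_erase.2 ⟨hAC.symm, hC⟩),
          Finset.insert_erase hA, hP.2.2]

end IsPartition

-- Meant for `A` inside a part of `P`: that part loses `A`, the other parts are disjoint from `A`.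
def cutParts (P : Finset (Finset α)) (A : Finset α) : Finset (Finset α) :=
  insert A (P.image (· \ A))

lemma cutParts_eq {P : Finset (Finset α)} {A C : Finset α} (hP : (P : Set (Finset α)).PairwiseDisjoint id)
    (hAC : Disjoint A C) (hmem : A ∪ C ∈ P) :
    cutParts P A = insert A (insert C (P.erase (A ∪ C))) := by
  have hrest : (P.erase (A ∪ C)).image (· \ A) = P.erase (A ∪ C) := by
    refine (Finset.image_congr fun q hq => ?_).trans Finset.image_id
    have hq' := Finset.mem_coe.1 hq
    exact Finset.sdiff_eq_self_of_disjoint ((hP (Finset.mem_of_mem_erase hq') hmem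
      (Finset.ne_of_mem_erase hq')).mono_right Finset.subset_union_left)
  rw [cutParts]
  conv_lhs => rw [← Finset.insert_erase hmem]
  rw [Finset.image_insert, Finset.union_sdiff_cancel_left hAC, hrest]

section Cuts

variable {B : ℕ}

def applyCut (L : Fin B → Finset (Finset α)) (i : Fin B) (A : Finset α) :
    Fin B → Finset (Finset α) :=
  fun j => if i ≤ j then cutParts (L j) A else L j

def applyCutEvent (L : Fin B → Finset (Finset α)) :
    Option (Fin B × Finset α) → Fin B → Finset (Finset α)
  | none => L
  | some (i, A) => applyCut L i A

def decodeCuts (S : Finset α) (l : List (Option (Fin B × Finset α))) :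
    Fin B → Finset (Finset α) :=
  l.foldl applyCutEvent fun _ => {S}

def cutEvents (S : Finset α) (m : α) (B : ℕ) : Finset (Option (Fin B × Finset α)) :=
  Finset.insertNone (Finset.univ ×ˢ (S.erase m).powerset.erase ∅)

lemma some_mem_cutEvents {S A : Finset α} {m : α} {i : Fin B} :
    some (i, A) ∈ cutEvents S m B ↔ A.Nonempty ∧ A ⊆ S.erase m := by
  simp [cutEvents, Finset.nonempty_iff_ne_empty]

lemma card_cutEvents {S : Finset α} {m : α} (hm : m ∈ S) :
    (cutEvents S m B).card = (2 ^ (S.card - 1) - 1) * B + 1 := by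
  rw [cutEvents, Finset.card_insertNone, Finset.card_product, Finset.card_univ, Fintype.card_fin,
    Finset.card_erase_of_mem (Finset.empty_mem_powerset _), Finset.card_powerset,
    Finset.card_erase_of_mem hm, mul_comm]

lemma eq_applyCut {L₀ L : Fin B → Finset (Finset α)} {i : Fin B} {A C : Finset α}
    (hdisj : ∀ j, (L₀ j : Set (Finset α)).PairwiseDisjoint id) (hAC : Disjoint A C)
    (hmem : ∀ j, i ≤ j → A ∪ C ∈ L₀ j) (hlt : ∀ j, j < i → L j = L₀ j)
    (hge : ∀ j, i ≤ j → L j = insert A (insert C ((L₀ j).erase (A ∪ C)))) :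
    L = applyCut L₀ i A := by
  funext j
  by_cases hij : i ≤ j
  · rw [applyCut, if_pos hij, hge j hij, cutParts_eq (hdisj j) hAC (hmem j hij)]
  · rw [applyCut, if_neg hij, hlt j (not_le.1 hij)]

lemma IsCut.exists_eq_applyCutEvent {S : Finset α} {L₀ L : Fin B → Finset (Finset α)}
    (hL₀ : ∀ j, IsPartition S (L₀ j)) (h : IsCut L₀ L) (m : α) :
    ∃ e ∈ cutEvents S m B, L = applyCutEvent L₀ e := by
  obtain ⟨i, P, A, C, hP, hA, hC, hAC, rfl, hlt, hge⟩ := h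
  have hdisj j := (hL₀ j).toFinpartition_s10.disjoint
  have hPS : A ∪ C ⊆ S := (hL₀ i).subset (hP i le_rfl)
  by_cases hm : m ∈ A
  · refine ⟨some (i, C), some_mem_cutEvents.2 ⟨hC, Finset.subset_erase.2
      ⟨Finset.subset_union_right.trans hPS, Finset.disjoint_left.1 hAC hm⟩⟩,
      eq_applyCut hdisj hAC.symm (fun j hj => Finset.union_comm A C ▸ hP j hj) hlt
      fun j hj => ?_⟩
    rw [hge j hj, Finset.insert_comm, Finset.union_comm]
  · exact ⟨some (i, A), some_mem_cutEvents.2 ⟨hA, Finset.subset_erase.2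
      ⟨Finset.subset_union_left.trans hPS, hm⟩⟩, eq_applyCut hdisj hAC hP hlt hge⟩

end Cuts

namespace IsLayout

variable {S : Finset α} {n : ℕ} {L : Fin (n + 1) → Finset (Finset α)}

lemma eq_const_of_card_le_one (hL : IsLayout S L) (hS : S.Nonempty)
    (h : (L (Fin.last n)).card ≤ 1) : L = fun _ => {S} := by
  have hlast := (hL.1 (Fin.last n)).eq_singleton_of_card_le_one hS h
  funext j
  obtain ⟨p, hp, hSp⟩ :=
    hL.2 j (Fin.last n) (Fin.le_last j) S (hlast ▸ Finset.mem_singleton_self S)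
  obtain rfl := ((hL.1 j).subset hp).antisymm hSp
  exact (hL.1 j).eq_singleton_of_mem hp

lemma exists_mergeable (hL : IsLayout S L) (h : 1 < (L (Fin.last n)).card) :
    ∃ i, (∀ j, i ≤ j → L j = L (Fin.last n)) ∧ ∃ A ∈ L (Fin.last n), ∃ C ∈ L (Fin.last n),
      A ≠ C ∧ ∀ j, j < i → ∃ p ∈ L j, A ∪ C ⊆ p := by
  obtain ⟨i, hi, hprev⟩ := Fin.exists_start_of_final_run L
  refine ⟨i, hi, ?_⟩
  rcases Fin.eq_zero_or_eq_succ i with rfl | ⟨k, rfl⟩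
  · obtain ⟨A, hA, C, hC, hAC⟩ := Finset.one_lt_card.1 h
    exact ⟨A, hA, C, hC, hAC, fun j hj => absurd hj (Fin.not_lt_zero j)⟩
  obtain ⟨A, hA, C, hC, hAC, p, hp, hACp⟩ := (hL.1 k.castSucc).exists_pair_subset_of_refines
    (hL.1 _) (hL.2 _ _ (Fin.le_last _)) (hprev k rfl).symm
  refine ⟨A, hA, C, hC, hAC, fun j hj => ?_⟩
  obtain ⟨p', hp', hpp'⟩ := hL.2 j k.castSucc (Fin.le_castSucc_iff.2 hj) p hp
  exact ⟨p', hp', hACp.trans hpp'⟩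

lemma exists_isCut (hL : IsLayout S L) (h : 1 < (L (Fin.last n)).card) :
    ∃ L₀, IsLayout S L₀ ∧ (L₀ (Fin.last n)).card + 1 = (L (Fin.last n)).card ∧ IsCut L₀ L := by
  obtain ⟨i, hi, A, hA, C, hC, hAC, hsub⟩ := hL.exists_mergeable h
  have hQ := hL.1 (Fin.last n)
  set M := mergeParts (L (Fin.last n)) A C
  let L₀ : Fin (n + 1) → Finset (Finset α) := fun j => if i ≤ j then M else L j
  have hge : ∀ j, i ≤ j → L₀ j = M := fun j hj => if_pos hj
  have hlt : ∀ j, ¬ i ≤ j → L₀ j = L j := fun j hj => if_neg hj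
  refine ⟨L₀, ⟨fun j => ?_, fun j j' hjj' => ?_⟩, ?_, ?_⟩
  · by_cases hij : i ≤ j
    · rw [hge j hij]
      exact hQ.mergeParts hA hC hAC
    · rw [hlt j hij]
      exact hL.1 j
  · by_cases hij : i ≤ j
    · rw [hge j hij, hge j' (hij.trans hjj')]
      exact fun q hq => ⟨q, hq, subset_rfl⟩
    rw [hlt j hij]
    by_cases hij' : i ≤ j'
    · rw [hge j' hij']
      exact refines_mergeParts (hL.2 j _ (Fin.le_last j)) (hsub j (not_le.1 hij))
    · rw [hlt j' hij']
      exact hL.2 j j' hjj'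
  · rw [hge _ (Fin.le_last i)]
    exact hQ.card_mergeParts hA hC hAC
  · refine ⟨i, A ∪ C, A, C, fun j hj => hge j hj ▸ Finset.mem_insert_self _ _, hQ.1 A hA,
      hQ.1 C hC, hQ.2.1 A hA C hC hAC, rfl, fun j hj => (hlt j (not_le.2 hj)).symm,
      fun j hj => ?_⟩
    rw [hge j hj, hQ.insert_insert_erase_mergeParts hA hC hAC, hi j hj]

lemma exists_eq_applyCutEvent (hL : IsLayout S L) (m : α) {k : ℕ}
    (h : (L (Fin.last n)).card ≤ k + 2) :
    ∃ L₀, IsLayout S L₀ ∧ (L₀ (Fin.last n)).card ≤ k + 1 ∧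
      ∃ e ∈ cutEvents S m (n + 1), L = applyCutEvent L₀ e := by
  rcases le_or_gt (L (Fin.last n)).card (k + 1) with hle | hgt
  · exact ⟨L, hL, hle, none, Finset.none_mem_insertNone, rfl⟩
  · obtain ⟨L₀, hL₀, hcard, hcut⟩ := hL.exists_isCut (by omega)
    exact ⟨L₀, hL₀, by omega, hcut.exists_eq_applyCutEvent hL₀.1 m⟩

lemma exists_decodeCuts {m : α} (hm : m ∈ S) {k : ℕ} (hL : IsLayout S L)
    (h : (L (Fin.last n)).card ≤ k + 1) :
    ∃ f ∈ Fintype.piFinset fun _ : Fin k => cutEvents S m (n + 1),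
      decodeCuts S (List.ofFn f) = L := by
  induction k generalizing L with
  | zero =>
    exact ⟨Fin.elim0, Fintype.mem_piFinset.2 fun t => t.elim0,
      (hL.eq_const_of_card_le_one ⟨m, hm⟩ h).symm⟩
  | succ k ih =>
    obtain ⟨L₀, hL₀, h₀, e, he, rfl⟩ := hL.exists_eq_applyCutEvent m h
    obtain ⟨f, hf, rfl⟩ := ih hL₀ h₀
    refine ⟨Fin.snoc f e, Fintype.mem_piFinset.2 fun t => ?_, ?_⟩
    · induction t using Fin.lastCases with
      | last => simpa using he
      | cast t => simpa using Fintype.mem_piFinset.1 hf t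
    · rw [List.ofFn_succ_last]
      simp [decodeCuts, List.foldl_append]

end IsLayout

end

/-- The size of the design space of tree-structured multi-task architectures: for a task
set `S` with `|S| = T ≥ 1` and `B ≥ 1` branching points, the number of tree-structured
layouts is at most `((2^(T-1) - 1) · B + 1)^(T-1)`. -/
theorem card_layouts_le {α : Type*} [DecidableEq α]
    (S : Finset α) (hS : 1 ≤ S.card) (B : ℕ) (hB : 1 ≤ B) :
    {L : Fin B → Finset (Finset α) | IsLayout S L}.ncard
      ≤ ((2 ^ (S.card - 1) - 1) * B + 1) ^ (S.card - 1) := by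
  obtain ⟨m, hm⟩ := Finset.card_pos.1 hS
  obtain ⟨n, rfl⟩ : ∃ n, B = n + 1 := ⟨B - 1, by omega⟩
  set words := Fintype.piFinset fun _ : Fin (S.card - 1) => cutEvents S m (n + 1)
  have hsub : {L | IsLayout S L} ⊆ (words.image fun f => decodeCuts S (List.ofFn f) : Set _) :=
    fun L hL => Finset.mem_image.2 <|
      hL.exists_decodeCuts hm (k := S.card - 1) (by have := (hL.1 (Fin.last n)).card_le; omega)
  calc {L | IsLayout S L}.ncard
      ≤ (words.image fun f => decodeCuts S (List.ofFn f)).card :=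
        (Set.ncard_le_ncard hsub (Finset.finite_toSet _)).trans_eq (Set.ncard_coe_finset _)
    _ ≤ words.card := Finset.card_image_le
    _ = ((2 ^ (S.card - 1) - 1) * (n + 1) + 1) ^ (S.card - 1) := by
      rw [Fintype.card_piFinset, Finset.prod_const, Finset.card_univ, Fintype.card_fin,
        card_cutEvents hm]
end
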